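/- For the mean-variance objective J(t, u) = E_t[X_T^u] - (γ/2) Var_t(X_T^u) with wealth dynamics dX_s = (r X_s + (μ - r) u_s) ds + σ u_s dW_s with constant coefficients r, μ > r, σ > 0, γ > 0, the feedback strategy û(s, x) = ((μ - r)/(γ σ²)) e^{-r(T - s)} makes J(t, u^ε) - J(t, û) ≤ 0 for every spike deviation u^ε that replaces û by any constant control value on [t, t+ε], for all sufficiently small ε > 0. -/

import Mathlib

open MeasureTheory intervalIntegral

/-- The mean-variance objective `J(t,u) = E_t[X_T^u] - (γ/2) Var_t(X_T^u)` for wealth dynamics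
`dX_s = (r X_s + (μ - r) u_s) ds + σ u_s dW_s` started at `X_t = x`, expressed through the
explicit conditional mean and variance of the terminal wealth under a deterministic
(time-dependent) control path `u`. -/
noncomputable def meanVarianceObjective (r μ σ γ t T x : ℝ) (u : ℝ → ℝ) : ℝ :=
  (Real.exp (r * (T - t)) * x + ∫ s in t..T, Real.exp (r * (T - s)) * ((μ - r) * u s))
    - (γ / 2) * ∫ s in t..T, Real.exp (2 * r * (T - s)) * σ ^ 2 * (u s) ^ 2

/-- Splitting an interval integral of a piecewise function into two continuous pieces. -/
lemma split_integral {a b c : ℝ} (hab : a ≤ b) (hbc : b ≤ c)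
    (f g₁ g₂ : ℝ → ℝ) (hg₁ : Continuous g₁) (hg₂ : Continuous g₂)
    (h1 : ∀ s ∈ Set.Ioc a b, f s = g₁ s) (h2 : ∀ s ∈ Set.Ioc b c, f s = g₂ s) :
    ∫ s in a..c, f s = (∫ s in a..b, g₁ s) + ∫ s in b..c, g₂ s := by
  have e1 : ∫ s in a..b, f s = ∫ s in a..b, g₁ s := by
    apply intervalIntegral.integral_congr_ae
    filter_upwards with s hs
    exact h1 s (by rwa [Set.uIoc_of_le hab] at hs)
  have e2 : ∫ s in b..c, f s = ∫ s in b..c, g₂ s := by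
    apply intervalIntegral.integral_congr_ae
    filter_upwards with s hs
    exact h2 s (by rwa [Set.uIoc_of_le hbc] at hs)
  have i1 : IntervalIntegrable f volume a b := by
    rw [intervalIntegrable_iff_integrableOn_Ioc_of_le hab]
    exact (hg₁.integrableOn_Ioc).congr_fun (fun s hs => (h1 s hs).symm) measurableSet_Ioc
  have i2 : IntervalIntegrable f volume b c := by
    rw [intervalIntegrable_iff_integrableOn_Ioc_of_le hbc]
    exact (hg₂.integrableOn_Ioc).congr_fun (fun s hs => (h2 s hs).symm) measurableSet_Ioc
  rw [← intervalIntegral.integral_add_adjacent_intervals i1 i2, e1, e2]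

/-- For the mean-variance problem with constant coefficients `r`, `μ > r`, `σ > 0`,
`γ > 0`, the feedback strategy `û(s,x) = ((μ-r)/(γσ²)) e^{-r(T-s)}` satisfies
`J(t, u^ε) - J(t, û) ≤ 0` for every spike deviation `u^ε` that replaces `û` by an arbitrary
constant value `v` on `[t, t+ε]`, for all sufficiently small `ε > 0`. -/
theorem mean_variance_equilibrium_is_strong
    (r μ σ γ t T x : ℝ) (hμr : r < μ) (hσ : 0 < σ) (hγ : 0 < γ)
    (ht : 0 ≤ t) (htT : t < T)
    (uhat : ℝ → ℝ) (huhat : uhat = fun s => (μ - r) / (γ * σ ^ 2) * Real.exp (-r * (T - s)))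
    (v : ℝ) :
    ∃ δ > 0, ∀ ε, 0 < ε → ε < δ →
      meanVarianceObjective r μ σ γ t T x (fun s => if s ≤ t + ε then v else uhat s)
        - meanVarianceObjective r μ σ γ t T x uhat ≤ 0 := by
  have hc : (0:ℝ) < γ * σ ^ 2 := by positivity
  have hcu : Continuous uhat := by rw [huhat]; continuity
  refine ⟨T - t, by linarith, fun ε hε hεδ => ?_⟩
  have h1 : t ≤ t + ε := by linarith
  have h2 : t + ε ≤ T := by linarith
  -- continuity of the four integrands
  have cL1 : Continuous fun s => Real.exp (r * (T - s)) * ((μ - r) * v) := by continuity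
  have cL2 : Continuous fun s => Real.exp (r * (T - s)) * ((μ - r) * uhat s) := by
    exact (Real.continuous_exp.comp (by continuity)).mul (continuous_const.mul hcu)
  have cQ1 : Continuous fun s => Real.exp (2 * r * (T - s)) * σ ^ 2 * v ^ 2 := by continuity
  have cQ2 : Continuous fun s => Real.exp (2 * r * (T - s)) * σ ^ 2 * (uhat s) ^ 2 := by
    exact ((Real.continuous_exp.comp (by continuity)).mul continuous_const).mul (hcu.pow 2)
  -- split the integrals for the spiked control
  have sU1 : (∫ s in t..T, Real.exp (r * (T - s)) * ((μ - r) * (if s ≤ t + ε then v else uhat s)))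
      = (∫ s in t..(t + ε), Real.exp (r * (T - s)) * ((μ - r) * v))
        + ∫ s in (t + ε)..T, Real.exp (r * (T - s)) * ((μ - r) * uhat s) := by
    refine split_integral h1 h2 _ _ _ cL1 cL2 (fun s hs => ?_) (fun s hs => ?_)
    · simp [hs.2]
    · simp [not_le.2 hs.1]
  have sU2 : (∫ s in t..T, Real.exp (2 * r * (T - s)) * σ ^ 2 * (if s ≤ t + ε then v else uhat s) ^ 2)
      = (∫ s in t..(t + ε), Real.exp (2 * r * (T - s)) * σ ^ 2 * v ^ 2)
        + ∫ s in (t + ε)..T, Real.exp (2 * r * (T - s)) * σ ^ 2 * (uhat s) ^ 2 := by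
    refine split_integral h1 h2 _ _ _ cQ1 cQ2 (fun s hs => ?_) (fun s hs => ?_)
    · simp [hs.2]
    · simp [not_le.2 hs.1]
  have sH1 : (∫ s in t..T, Real.exp (r * (T - s)) * ((μ - r) * uhat s))
      = (∫ s in t..(t + ε), Real.exp (r * (T - s)) * ((μ - r) * uhat s))
        + ∫ s in (t + ε)..T, Real.exp (r * (T - s)) * ((μ - r) * uhat s) :=
    (intervalIntegral.integral_add_adjacent_intervals
      (cL2.intervalIntegrable _ _) (cL2.intervalIntegrable _ _)).symm
  have sH2 : (∫ s in t..T, Real.exp (2 * r * (T - s)) * σ ^ 2 * (uhat s) ^ 2)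
      = (∫ s in t..(t + ε), Real.exp (2 * r * (T - s)) * σ ^ 2 * (uhat s) ^ 2)
        + ∫ s in (t + ε)..T, Real.exp (2 * r * (T - s)) * σ ^ 2 * (uhat s) ^ 2 :=
    (intervalIntegral.integral_add_adjacent_intervals
      (cQ2.intervalIntegrable _ _) (cQ2.intervalIntegrable _ _)).symm
  have cDL : Continuous fun s => Real.exp (r * (T - s)) * ((μ - r) * v)
      - Real.exp (r * (T - s)) * ((μ - r) * uhat s) := cL1.sub cL2
  have cDQ : Continuous fun s => γ / 2 * (Real.exp (2 * r * (T - s)) * σ ^ 2 * v ^ 2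
      - Real.exp (2 * r * (T - s)) * σ ^ 2 * (uhat s) ^ 2) := continuous_const.mul (cQ1.sub cQ2)
  have iDL : IntervalIntegrable (fun s => Real.exp (r * (T - s)) * ((μ - r) * v)
      - Real.exp (r * (T - s)) * ((μ - r) * uhat s)) volume t (t + ε) :=
    cDL.intervalIntegrable _ _
  have iDQ : IntervalIntegrable (fun s => γ / 2 * (Real.exp (2 * r * (T - s)) * σ ^ 2 * v ^ 2
      - Real.exp (2 * r * (T - s)) * σ ^ 2 * (uhat s) ^ 2)) volume t (t + ε) :=
    cDQ.intervalIntegrable _ _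
  simp only [meanVarianceObjective]
  rw [sU1, sU2, sH1, sH2]
  have hring :
      (Real.exp (r * (T - t)) * x
          + ((∫ s in t..(t + ε), Real.exp (r * (T - s)) * ((μ - r) * v))
            + ∫ s in (t + ε)..T, Real.exp (r * (T - s)) * ((μ - r) * uhat s))
        - γ / 2 * ((∫ s in t..(t + ε), Real.exp (2 * r * (T - s)) * σ ^ 2 * v ^ 2)
            + ∫ s in (t + ε)..T, Real.exp (2 * r * (T - s)) * σ ^ 2 * (uhat s) ^ 2))
      - (Real.exp (r * (T - t)) * x
          + ((∫ s in t..(t + ε), Real.exp (r * (T - s)) * ((μ - r) * uhat s))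
            + ∫ s in (t + ε)..T, Real.exp (r * (T - s)) * ((μ - r) * uhat s))
        - γ / 2 * ((∫ s in t..(t + ε), Real.exp (2 * r * (T - s)) * σ ^ 2 * (uhat s) ^ 2)
            + ∫ s in (t + ε)..T, Real.exp (2 * r * (T - s)) * σ ^ 2 * (uhat s) ^ 2))
      = ((∫ s in t..(t + ε), Real.exp (r * (T - s)) * ((μ - r) * v))
          - ∫ s in t..(t + ε), Real.exp (r * (T - s)) * ((μ - r) * uhat s))
        - γ / 2 * ((∫ s in t..(t + ε), Real.exp (2 * r * (T - s)) * σ ^ 2 * v ^ 2)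
          - ∫ s in t..(t + ε), Real.exp (2 * r * (T - s)) * σ ^ 2 * (uhat s) ^ 2) := by
    ring
  rw [hring,
    ← intervalIntegral.integral_sub (cL1.intervalIntegrable _ _) (cL2.intervalIntegrable _ _),
    ← intervalIntegral.integral_sub (cQ1.intervalIntegrable _ _) (cQ2.intervalIntegrable _ _),
    ← intervalIntegral.integral_const_mul,
    ← integral_sub iDL iDQ]
  have hpt : ∀ s : ℝ, Real.exp (r * (T - s)) * ((μ - r) * v)
      - Real.exp (r * (T - s)) * ((μ - r) * uhat s)
      - γ / 2 * (Real.exp (2 * r * (T - s)) * σ ^ 2 * v ^ 2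
        - Real.exp (2 * r * (T - s)) * σ ^ 2 * (uhat s) ^ 2) ≤ 0 := by
    intro s
    rw [huhat]
    simp only
    set e := Real.exp (r * (T - s)) with he'
    have he : 0 < e := Real.exp_pos _
    have hee : Real.exp (2 * r * (T - s)) = e ^ 2 := by
      rw [he', ← Real.exp_nat_mul]
      ring_nf
    have hn : Real.exp (-r * (T - s)) * e = 1 := by
      rw [he', ← Real.exp_add]
      ring_nf
      exact Real.exp_zero
    set n := Real.exp (-r * (T - s)) with hn'
    have hnval : n = e⁻¹ := by
      field_simp at hn ⊢
      linarith [hn]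
    rw [hee, hnval]
    have h3 : e * ((μ - r) * ((μ - r) / (γ * σ ^ 2) * e⁻¹)) = (μ - r) ^ 2 / (γ * σ ^ 2) := by
      field_simp
    have h4 : e ^ 2 * σ ^ 2 * ((μ - r) / (γ * σ ^ 2) * e⁻¹) ^ 2 = (μ - r) ^ 2 / (γ ^ 2 * σ ^ 2) := by
      field_simp
    rw [h3, h4]
    have key : 0 ≤ ((γ * σ ^ 2) * (e * v) - (μ - r)) ^ 2 := sq_nonneg _
    have goal2 : (e * ((μ - r) * v) - (μ - r) ^ 2 / (γ * σ ^ 2)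
        - γ / 2 * (e ^ 2 * σ ^ 2 * v ^ 2 - (μ - r) ^ 2 / (γ ^ 2 * σ ^ 2)))
        = -(((γ * σ ^ 2) * (e * v) - (μ - r)) ^ 2) / (2 * (γ * σ ^ 2)) := by
      field_simp
      ring
    rw [goal2]
    apply div_nonpos_of_nonpos_of_nonneg
    · linarith
    · linarith

  have hnn : (0:ℝ) ≤ ∫ s in t..(t + ε), -(Real.exp (r * (T - s)) * ((μ - r) * v)
      - Real.exp (r * (T - s)) * ((μ - r) * uhat s)
      - γ / 2 * (Real.exp (2 * r * (T - s)) * σ ^ 2 * v ^ 2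
        - Real.exp (2 * r * (T - s)) * σ ^ 2 * (uhat s) ^ 2)) := by
    apply intervalIntegral.integral_nonneg h1
    intro s _
    linarith [hpt s]
  rw [intervalIntegral.integral_neg] at hnn
  linarith
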